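/- arXiv:math/0610152 — 4 statements merged into one kernel-verified Lean document; each statement's English description precedes it below -/
import Mathlib

section
/- The bivector Λ₄ = a·y·z·∂₂∧∂₃ + a·x·z·∂₃∧∂₁ + (b·x·y + z²)·∂₁∧∂₂ on ℝ³ is a Poisson bivector for all real a, b, i.e. the associated bracket satisfies the Jacobi identity. -/
/-!
Identify a bivector `Λ` on ℝ³ with the vector field `A = (Λ²³, Λ³¹, Λ¹²)`. The second derivatives
of `f, g, h` cancel in the Jacobiator by symmetry of mixed partials, and what remains is
`-(A · curl A)` times the Jacobian determinant of `(f, g, h)`. So `Λ` is Poisson as soon as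
`A · curl A = 0`, and for `Λ₄` the curl `((b - a)x, (a - b)y, 0)` is orthogonal to
`A = (ayz, axz, bxy + z²)`.
-/

open MvPolynomial

/-- The Poisson bracket `{f,g} = Λ(df,dg)` of the bivector on ℝ³ with components
`A23 = Λ²³`, `A31 = Λ³¹`, `A12 = Λ¹²` (coordinates `x = X 0`, `y = X 1`, `z = X 2`). -/
noncomputable def pbr (A23 A31 A12 f g : MvPolynomial (Fin 3) ℝ) : MvPolynomial (Fin 3) ℝ :=
  A23 * (pderiv 1 f * pderiv 2 g - pderiv 2 f * pderiv 1 g)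
  + A31 * (pderiv 2 f * pderiv 0 g - pderiv 0 f * pderiv 2 g)
  + A12 * (pderiv 0 f * pderiv 1 g - pderiv 1 f * pderiv 0 g)

theorem MvPolynomial.pderiv_comm {R σ : Type*} [CommSemiring R] (i j : σ) (f : MvPolynomial σ R) :
    pderiv i (pderiv j f) = pderiv j (pderiv i f) := by
  classical
  induction f using MvPolynomial.induction_on with
  | C a => simp
  | add f g hf hg => simp only [map_add, hf, hg]
  | mul_X f k hf =>
    simp only [pderiv_mul, map_add, pderiv_X, hf, Pi.single_apply]
    split_ifs <;> simp [add_right_comm]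

/-- `A · curl A` for `A = (A23, A31, A12)`. -/
noncomputable def dotCurl (A23 A31 A12 : MvPolynomial (Fin 3) ℝ) : MvPolynomial (Fin 3) ℝ :=
  A23 * (pderiv 1 A12 - pderiv 2 A31) + A31 * (pderiv 2 A23 - pderiv 0 A12)
    + A12 * (pderiv 0 A31 - pderiv 1 A23)

theorem pbr_jacobiator (A23 A31 A12 f g h : MvPolynomial (Fin 3) ℝ) :
    pbr A23 A31 A12 f (pbr A23 A31 A12 g h) + pbr A23 A31 A12 g (pbr A23 A31 A12 h f)
      + pbr A23 A31 A12 h (pbr A23 A31 A12 f g) =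
    -dotCurl A23 A31 A12 *
      Matrix.det !![pderiv 0 f, pderiv 1 f, pderiv 2 f; pderiv 0 g, pderiv 1 g, pderiv 2 g;
        pderiv 0 h, pderiv 1 h, pderiv 2 h] := by
  simp only [Matrix.det_fin_three, Matrix.of_apply, Matrix.cons_val', Matrix.cons_val_zero,
    Matrix.cons_val_fin_one, Matrix.cons_val_one, Matrix.cons_val, pbr, dotCurl, pderiv_mul,
    map_add, map_sub, pderiv_comm (1 : Fin 3) 0, pderiv_comm (2 : Fin 3) 0,
    pderiv_comm (2 : Fin 3) 1]
  ring

theorem pbr_jacobi_of_dotCurl_eq_zero {A23 A31 A12 : MvPolynomial (Fin 3) ℝ}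
    (hA : dotCurl A23 A31 A12 = 0) (f g h : MvPolynomial (Fin 3) ℝ) :
    pbr A23 A31 A12 f (pbr A23 A31 A12 g h) + pbr A23 A31 A12 g (pbr A23 A31 A12 h f)
      + pbr A23 A31 A12 h (pbr A23 A31 A12 f g) = 0 := by
  rw [pbr_jacobiator, hA, neg_zero, zero_mul]

theorem dotCurl_lambda4 (a b : ℝ) :
    dotCurl (C a * (X 1 * X 2)) (C a * (X 0 * X 2)) (C b * (X 0 * X 1) + X 2 ^ 2) = 0 := by
  simp only [dotCurl, pderiv_C, map_add, pderiv_mul, pderiv_pow, pderiv_X, Pi.single_apply,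
    Fin.reduceEq, if_true, if_false]
  ring

/-- The bivector `Λ₄ = a·yz·∂₂∧∂₃ + a·xz·∂₃∧∂₁ + (b·xy + z²)·∂₁∧∂₂` on ℝ³ is a
Poisson bivector for all real `a, b`: its bracket satisfies the Jacobi identity. -/
theorem stmt4 (a b : ℝ) (f g h : MvPolynomial (Fin 3) ℝ) :
    pbr (C a * (X 1 * X 2)) (C a * (X 0 * X 2)) (C b * (X 0 * X 1) + X 2 ^ 2) f
      (pbr (C a * (X 1 * X 2)) (C a * (X 0 * X 2)) (C b * (X 0 * X 1) + X 2 ^ 2) g h)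
    + pbr (C a * (X 1 * X 2)) (C a * (X 0 * X 2)) (C b * (X 0 * X 1) + X 2 ^ 2) g
      (pbr (C a * (X 1 * X 2)) (C a * (X 0 * X 2)) (C b * (X 0 * X 1) + X 2 ^ 2) h f)
    + pbr (C a * (X 1 * X 2)) (C a * (X 0 * X 2)) (C b * (X 0 * X 1) + X 2 ^ 2) h
      (pbr (C a * (X 1 * X 2)) (C a * (X 0 * X 2)) (C b * (X 0 * X 1) + X 2 ^ 2) f g)
    = 0 :=
  pbr_jacobi_of_dotCurl_eq_zero (dotCurl_lambda4 a b) f g h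
end

section
/- Let Λ₄ = a·yz·∂₂∧∂₃ + a·xz·∂₃∧∂₁ + (b·xy + z²)·∂₁∧∂₂ with a,b real, 2a + b ≠ 0. If b/a = β/α in lowest terms with α, β positive integers, then the function C = (xy + z²/(2a+b))^α · z^β is a Casimir function of Λ₄, i.e. {C, f} = 0 for every polynomial f. -/
open MvPolynomial

/-!
`C = Q^α z^β` with `Q = xy + z²/(2a+b)` is the exponential of `α log Q + β log z`. Since
`g ↦ {g, f}` is a derivation, `Q z {C, f} = C (α z {Q, f} + β Q {z, f})`, and the factor on the
right vanishes identically: both terms are multiples of `z (x ∂ₓf - y ∂ᵧf)`, and their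
coefficients cancel by `bα = aβ` (the `xy` part) and `(2a+b)⁻¹(2a+b) = 1` (the `z²` part).
As `Q z ≠ 0` in the domain `ℝ[x, y, z]`, `{C, f} = 0`.
-/

namespace Derivation

variable {R A : Type*} [CommSemiring R] [CommRing A] [Algebra R A] (D : Derivation R A A)

theorem mul_apply_pow (a : A) (n : ℕ) : a * D (a ^ n) = n * a ^ n * D a := by
  rcases n with _ | n
  · simp
  · rw [leibniz_pow, smul_eq_mul, nsmul_eq_mul, Nat.add_sub_cancel, pow_succ]
    ring

theorem mul_mul_apply_pow_mul_pow (p q : A) (m n : ℕ) :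
    p * q * D (p ^ m * q ^ n) = p ^ m * q ^ n * (m * q * D p + n * p * D q) := by
  rw [D.leibniz, smul_eq_mul, smul_eq_mul]
  linear_combination q ^ (n + 1) * D.mul_apply_pow p m + p ^ (m + 1) * D.mul_apply_pow q n

theorem apply_pow_mul_pow_eq_zero [IsDomain A] {p q : A} (hp : p ≠ 0) (hq : q ≠ 0) {m n : ℕ}
    (h : m * q * D p + n * p * D q = 0) : D (p ^ m * q ^ n) = 0 := by
  have key := D.mul_mul_apply_pow_mul_pow p q m n
  rw [h, mul_zero] at key
  exact (mul_eq_zero.mp key).resolve_left (mul_ne_zero hp hq)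

end Derivation

noncomputable def pbrLeft (A23 A31 A12 f : MvPolynomial (Fin 3) ℝ) :
    Derivation ℝ (MvPolynomial (Fin 3) ℝ) (MvPolynomial (Fin 3) ℝ) :=
  (A12 * pderiv 1 f - A31 * pderiv 2 f) • pderiv 0
    + (A23 * pderiv 2 f - A12 * pderiv 0 f) • pderiv 1
    + (A31 * pderiv 0 f - A23 * pderiv 1 f) • pderiv 2

theorem pbrLeft_apply (A23 A31 A12 f g : MvPolynomial (Fin 3) ℝ) :
    pbrLeft A23 A31 A12 f g = pbr A23 A31 A12 g f := by
  simp only [pbrLeft, pbr, Derivation.add_apply, Derivation.smul_apply, smul_eq_mul]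
  ring

theorem pbr_lambda4_logCasimir (a b : ℝ) (hab : 2 * a + b ≠ 0) (α β : ℕ)
    (hratio : b * (α : ℝ) = a * (β : ℝ)) (f : MvPolynomial (Fin 3) ℝ) :
    (α : MvPolynomial (Fin 3) ℝ) * X 2 *
        pbr (C a * (X 1 * X 2)) (C a * (X 0 * X 2)) (C b * (X 0 * X 1) + X 2 ^ 2)
          (X 0 * X 1 + C (2*a+b)⁻¹ * X 2 ^ 2) f
      + (β : MvPolynomial (Fin 3) ℝ) * (X 0 * X 1 + C (2*a+b)⁻¹ * X 2 ^ 2) *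
        pbr (C a * (X 1 * X 2)) (C a * (X 0 * X 2)) (C b * (X 0 * X 1) + X 2 ^ 2) (X 2) f
      = 0 := by
  have hinv : C (2*a+b)⁻¹ * (2 * C a + C b) = (1 : MvPolynomial (Fin 3) ℝ) := by
    rw [← map_ofNat C, ← map_mul, ← map_add, ← map_mul, inv_mul_cancel₀ hab, map_one]
  have hratio' : C b * (α : MvPolynomial (Fin 3) ℝ) = C a * (β : MvPolynomial (Fin 3) ℝ) := by
    rw [← map_natCast C, ← map_natCast C, ← map_mul, ← map_mul, hratio]
  simp only [pbr, pderiv_mul, map_add, Derivation.leibniz_pow, pderiv_C, pderiv_X, Fin.isValue,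
    ne_eq, zero_ne_one, one_ne_zero, Fin.reduceEq, not_false_eq_true, Pi.single_eq_of_ne,
    Pi.single_eq_same, Nat.add_one_sub_one, pow_one, Nat.cast_ofNat, smul_eq_mul, nsmul_eq_mul,
    zero_mul, mul_zero, mul_one, one_mul, zero_add, add_zero, zero_sub, sub_zero, mul_neg,
    sub_self]
  linear_combination X 2 * (X 0 * pderiv 0 f - X 1 * pderiv 1 f) *
    (α * X 2 ^ 2 * hinv - (X 0 * X 1 + C (2*a+b)⁻¹ * X 2 ^ 2) * hratio')

theorem stmt5_general (a b : ℝ) (hab : 2 * a + b ≠ 0)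
    (α β : ℕ)
    (hratio : b * (α : ℝ) = a * (β : ℝ)) :
    ∀ f : MvPolynomial (Fin 3) ℝ,
      pbr (C a * (X 1 * X 2)) (C a * (X 0 * X 2)) (C b * (X 0 * X 1) + X 2 ^ 2)
        ((X 0 * X 1 + C (2*a+b)⁻¹ * X 2 ^ 2) ^ α * X 2 ^ β) f = 0 := by
  intro f
  have hQ : (X 0 * X 1 + C (2*a+b)⁻¹ * X 2 ^ 2 : MvPolynomial (Fin 3) ℝ) ≠ 0 := fun h => by
    simpa using congrArg (eval ![1, 1, 0]) h
  rw [← pbrLeft_apply]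
  refine (pbrLeft _ _ _ f).apply_pow_mul_pow_eq_zero hQ (X_ne_zero 2) ?_
  simpa only [pbrLeft_apply] using pbr_lambda4_logCasimir a b hab α β hratio f

/-- For `Λ₄ = a·yz·∂₂∧∂₃ + a·xz·∂₃∧∂₁ + (b·xy + z²)·∂₁∧∂₂` with `2a+b ≠ 0` and
`b/a = β/α` in lowest terms (α, β positive integers), the function
`C = (xy + z²/(2a+b))^α · z^β` is a Casimir: it Poisson-commutes with everything. -/
theorem stmt5 (a b : ℝ) (ha : a ≠ 0) (hab : 2 * a + b ≠ 0)
    (α β : ℕ) (hα : 0 < α) (hβ : 0 < β) (hcop : Nat.Coprime α β)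
    (hratio : b * (α : ℝ) = a * (β : ℝ)) :
    ∀ f : MvPolynomial (Fin 3) ℝ,
      pbr (C a * (X 1 * X 2)) (C a * (X 0 * X 2)) (C b * (X 0 * X 1) + X 2 ^ 2)
        ((X 0 * X 1 + C (2*a+b)⁻¹ * X 2 ^ 2) ^ α * X 2 ^ β) f = 0 :=
  stmt5_general a b hab α β hratio
end

section
/- Let Λ_I = a·yz·∂₂∧∂₃ + a·xz·∂₃∧∂₁ + b·xy·∂₁∧∂₂ with a,b ∈ ℝ*, b/a = β/α ∈ ℚ with α, β coprime positive integers. Then (xy)^α · z^β is a Casimir function of Λ_I. -/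
/-!
Read `Λ = (a·yz, a·xz, b·xy)` as a vector field; then `{h, f} = (Λ × ∇h) · ∇f`, so `h` is a
Casimir once `Λ × ∇h = 0`. For a monomial `h` with exponent vector `e`, Euler's identity
`xᵢ ∂ᵢh = eᵢ h` makes each component of `Λ × ∇h` a monomial multiple of `h` times the
corresponding component of `(a, a, b) × e`. For `h = (xy)^α z^β` this is
`(a, a, b) × (α, α, β)`, which vanishes exactly when `b α = a β`.
-/

open MvPolynomial

theorem pbr_eq_zero_of_cross_eq_zero {A23 A31 A12 h : MvPolynomial (Fin 3) ℝ}
    (h₀ : A31 * pderiv 2 h = A12 * pderiv 1 h) (h₁ : A12 * pderiv 0 h = A23 * pderiv 2 h)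
    (h₂ : A23 * pderiv 1 h = A31 * pderiv 0 h) (f : MvPolynomial (Fin 3) ℝ) :
    pbr A23 A31 A12 h f = 0 := by
  unfold pbr
  linear_combination pderiv 0 f * h₀ + pderiv 1 f * h₁ + pderiv 2 f * h₂

theorem pbr_diagonal_quadratic_monomial_eq_zero {c₀ c₁ c₂ r : ℝ} {m : Fin 3 →₀ ℕ}
    (h₀ : c₁ * m 2 = c₂ * m 1) (h₁ : c₂ * m 0 = c₀ * m 2) (h₂ : c₀ * m 1 = c₁ * m 0)
    (f : MvPolynomial (Fin 3) ℝ) :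
    pbr (C c₀ * (X 1 * X 2)) (C c₁ * (X 0 * X 2)) (C c₂ * (X 0 * X 1)) (monomial m r) f = 0 := by
  have euler (i : Fin 3) :
      X i * pderiv i (monomial m r) = (m i : MvPolynomial (Fin 3) ℝ) * monomial m r := by
    rw [X_mul_pderiv_monomial, nsmul_eq_mul]
  have castC {u v : ℝ} {i j : Fin 3} (h : u * m i = v * m j) :
      C u * (m i : MvPolynomial (Fin 3) ℝ) = C v * (m j : MvPolynomial (Fin 3) ℝ) := by
    simp only [← map_natCast (C (σ := Fin 3)), ← map_mul, h]
  apply pbr_eq_zero_of_cross_eq_zero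
  · linear_combination C c₁ * X 0 * euler 2 - C c₂ * X 0 * euler 1 + X 0 * monomial m r * castC h₀
  · linear_combination C c₂ * X 1 * euler 0 - C c₀ * X 1 * euler 2 + X 1 * monomial m r * castC h₁
  · linear_combination C c₀ * X 2 * euler 1 - C c₁ * X 2 * euler 0 + X 2 * monomial m r * castC h₂

theorem stmt6_general (a b : ℝ)
    (α β : ℕ)
    (hratio : b * (α : ℝ) = a * (β : ℝ)) :
    ∀ f : MvPolynomial (Fin 3) ℝ,
      pbr (C a * (X 1 * X 2)) (C a * (X 0 * X 2)) (C b * (X 0 * X 1))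
        ((X 0 * X 1) ^ α * X 2 ^ β) f = 0 := by
  have hmono : ((X 0 * X 1) ^ α * X 2 ^ β : MvPolynomial (Fin 3) ℝ)
      = monomial (Finsupp.single 0 α + Finsupp.single 1 α + Finsupp.single 2 β) 1 := by
    simp only [mul_pow, X_pow_eq_monomial, monomial_mul, mul_one]
  rw [hmono]
  apply pbr_diagonal_quadratic_monomial_eq_zero <;> simp [hratio]

/-- For `Λ_I = a·yz·∂₂∧∂₃ + a·xz·∂₃∧∂₁ + b·xy·∂₁∧∂₂` with `a, b ≠ 0` and
`b/a = β/α` with α, β coprime positive integers, `(xy)^α · z^β` is a Casimir. -/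
theorem stmt6 (a b : ℝ) (ha : a ≠ 0) (hb : b ≠ 0)
    (α β : ℕ) (hα : 0 < α) (hβ : 0 < β) (hcop : Nat.Coprime α β)
    (hratio : b * (α : ℝ) = a * (β : ℝ)) :
    ∀ f : MvPolynomial (Fin 3) ℝ,
      pbr (C a * (X 1 * X 2)) (C a * (X 0 * X 2)) (C b * (X 0 * X 1))
        ((X 0 * X 1) ^ α * X 2 ^ β) f = 0 :=
  stmt6_general a b α β hratio
end

section
/- Let Λ₈ = b(x²+y²)∂₁∧∂₂ + (2b+c)xz∂₂∧∂₃ + (2b+c)yz∂₃∧∂₁ ± z²∂₁∧∂₂ with b(2b+c) > 0, 3b+c ≠ 0, and b/c = β/γ in lowest terms with β ∈ ℕ*, γ ∈ ℤ* and γ even when needed; then for any i ∈ ℕ with γ·i even, the function ((x²+y²) ± z²/(3b+c))^{(β+γ/2)i} · z^{β i} is a Casimir of Λ₈. -/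
/-!
A function `F` is a Casimir of a Poisson bivector on ℝ³ as soon as its gradient is parallel to
the bivector's axial vector `(Λ²³, Λ³¹, Λ¹²)`. For `F = P ^ e * z ^ n` with
`P = x² + y² + d z²` the logarithmic derivative gives
`P z ∇F = (e z ∇P + n P ∇z) F = (2exz, 2eyz, 2edz² + nP) F`.
The relations `n (2b + c) = 2eb` (from `bγ = cβ` and `2e = (2β + γ) i`) and `d (3b + c) = s`
turn `(2b + c)` times this vector into `2e` times the axial vector of `Λ₈`.
-/

open MvPolynomial

theorem Derivation.mul_leibniz_pow {R A M : Type*} [CommSemiring R] [CommSemiring A]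
    [AddCommMonoid M] [Module A M] [Module R M] [Algebra R A] [IsScalarTower R A M]
    (D : Derivation R A M) (a : A) (n : ℕ) :
    a • D (a ^ n) = n • a ^ n • D a := by
  rcases n with _ | n
  · simp
  · rw [D.leibniz_pow, smul_comm, smul_smul, ← pow_succ', Nat.add_sub_cancel]

theorem Derivation.mul_leibniz_pow_mul_pow {R A : Type*} [CommSemiring R] [CommRing A]
    [Algebra R A] (D : Derivation R A A) (p q : A) (m n : ℕ) :
    p * q * D (p ^ m * q ^ n) = ((m : A) * (q * D p) + (n : A) * (p * D q)) * (p ^ m * q ^ n) := by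
  have hp := D.mul_leibniz_pow p m
  have hq := D.mul_leibniz_pow q n
  simp only [smul_eq_mul, nsmul_eq_mul] at hp hq
  rw [D.leibniz, smul_eq_mul, smul_eq_mul]
  linear_combination (q * q ^ n) * hp + (p * p ^ m) * hq

theorem pbr_eq_zero_of_mul_pderiv_eq {A : Fin 3 → MvPolynomial (Fin 3) ℝ}
    {F u v : MvPolynomial (Fin 3) ℝ} (hu : u ≠ 0) (h : ∀ j, u * pderiv j F = v * A j)
    (g : MvPolynomial (Fin 3) ℝ) : pbr (A 0) (A 1) (A 2) F g = 0 := by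
  refine (mul_eq_zero.mp ?_).resolve_left hu
  unfold pbr
  linear_combination (A 0 * pderiv 2 g - A 2 * pderiv 0 g) * h 1
    + (A 1 * pderiv 0 g - A 0 * pderiv 1 g) * h 2 + (A 2 * pderiv 1 g - A 1 * pderiv 2 g) * h 0

noncomputable def lambda8 (b c s : ℝ) : Fin 3 → MvPolynomial (Fin 3) ℝ :=
  ![C (2 * b + c) * (X 0 * X 2), C (2 * b + c) * (X 1 * X 2),
    C b * (X 0 ^ 2 + X 1 ^ 2) + C s * X 2 ^ 2]

noncomputable def quadric (d : ℝ) : MvPolynomial (Fin 3) ℝ := X 0 ^ 2 + X 1 ^ 2 + C d * X 2 ^ 2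

theorem quadric_ne_zero (d : ℝ) : quadric d ≠ 0 := fun h => by
  simpa [quadric] using congrArg (eval ![1, 0, 0]) h

theorem C_mul_logGradient_eq_lambda8 {b c d s : ℝ} {n e : ℕ}
    (hkey : (n : ℝ) * (2 * b + c) = 2 * e * b) (hd : d * (3 * b + c) = s) (j : Fin 3) :
    C (2 * b + c) * ((e : MvPolynomial (Fin 3) ℝ) * (X 2 * pderiv j (quadric d))
        + (n : MvPolynomial (Fin 3) ℝ) * (quadric d * pderiv j (X 2)))
      = C (2 * (e : ℝ)) * lambda8 b c s j := by
  have hkey' := congrArg (C : ℝ → MvPolynomial (Fin 3) ℝ) hkey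
  have hd' := congrArg (C : ℝ → MvPolynomial (Fin 3) ℝ) hd
  simp only [map_mul, map_add, map_ofNat, map_natCast] at hkey' hd' ⊢
  fin_cases j <;> simp [lambda8, quadric, pderiv_X, map_ofNat]
  · ring
  · ring
  · linear_combination (X 0 ^ 2 + X 1 ^ 2 + C d * X 2 ^ 2) * hkey' + 2 * e * X 2 ^ 2 * hd'

theorem stmt19_general (b c s : ℝ)
    (hbc : b * (2 * b + c) > 0) (h3bc : 3 * b + c ≠ 0)
    (β : ℕ) (γ : ℤ)
    (hratio : b * (γ : ℝ) = c * (β : ℝ))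
    (i e : ℕ) (he : 2 * (e : ℤ) = (2 * (β : ℤ) + γ) * (i : ℤ)) :
    ∀ f : MvPolynomial (Fin 3) ℝ,
      pbr (C (2*b+c) * (X 0 * X 2)) (C (2*b+c) * (X 1 * X 2))
        (C b * (X 0 ^ 2 + X 1 ^ 2) + C s * X 2 ^ 2)
        ((X 0 ^ 2 + X 1 ^ 2 + C (s / (3 * b + c)) * X 2 ^ 2) ^ e * X 2 ^ (β * i)) f
      = 0 := by
  set d := s / (3 * b + c)
  have hd : d * (3 * b + c) = s := div_mul_cancel₀ s h3bc
  have hkey : ((β * i : ℕ) : ℝ) * (2 * b + c) = 2 * e * b := by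
    have he' : 2 * (e : ℝ) = (2 * β + γ) * i := by exact_mod_cast he
    push_cast
    linear_combination (-b) * he' + (-(i : ℝ)) * hratio
  have h2bc : 2 * b + c ≠ 0 := fun h => by simp [h] at hbc
  have hu : C (2 * b + c) * (quadric d * X 2) ≠ 0 :=
    mul_ne_zero (C_ne_zero.mpr h2bc) (mul_ne_zero (quadric_ne_zero d) (X_ne_zero 2))
  refine pbr_eq_zero_of_mul_pderiv_eq (A := lambda8 b c s) (F := quadric d ^ e * X 2 ^ (β * i)) hu
    (v := C (2 * (e : ℝ)) * (quadric d ^ e * X 2 ^ (β * i))) fun j => ?_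
  linear_combination C (2 * b + c) * (pderiv j).mul_leibniz_pow_mul_pow (quadric d) (X 2) e (β * i)
    + (quadric d ^ e * X 2 ^ (β * i)) * C_mul_logGradient_eq_lambda8 hkey hd j

/-- For `Λ₈ = b(x²+y²)∂₁∧∂₂ + (2b+c)xz∂₂∧∂₃ + (2b+c)yz∂₃∧∂₁ ± z²∂₁∧∂₂` with
`b(2b+c) > 0`, `3b+c ≠ 0`, and `b/c = β/γ` in lowest terms (β ∈ ℕ*, γ ∈ ℤ*),
and `i ∈ ℕ` with `γ·i` even, the function
`((x²+y²) ± z²/(3b+c))^{(β+γ/2)i} · z^{βi}` is a Casimir of Λ₈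
(the natural exponent `e` satisfies `2e = (2β+γ)i`). -/
theorem stmt19 (b c s : ℝ) (hs : s = 1 ∨ s = -1)
    (hbc : b * (2 * b + c) > 0) (h3bc : 3 * b + c ≠ 0) (hc : c ≠ 0)
    (β : ℕ) (γ : ℤ) (hβ : 0 < β) (hγ : γ ≠ 0) (hcop : Nat.Coprime β γ.natAbs)
    (hratio : b * (γ : ℝ) = c * (β : ℝ))
    (i e : ℕ) (he : 2 * (e : ℤ) = (2 * (β : ℤ) + γ) * (i : ℤ)) :
    ∀ f : MvPolynomial (Fin 3) ℝ,
      pbr (C (2*b+c) * (X 0 * X 2)) (C (2*b+c) * (X 1 * X 2))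
        (C b * (X 0 ^ 2 + X 1 ^ 2) + C s * X 2 ^ 2)
        ((X 0 ^ 2 + X 1 ^ 2 + C (s / (3 * b + c)) * X 2 ^ 2) ^ e * X 2 ^ (β * i)) f
      = 0 :=
  stmt19_general b c s hbc h3bc β γ hratio i e he
end
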